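/- arXiv:2405.20864 — 2 statements merged into one kernel-verified Lean document; each statement's English description precedes it below -/
import Mathlib

section
/- Let A be a self-adjoint operator on a finite-dimensional complex inner product space V and v ∈ V a nonzero vector. Then the function f(t) = log ‖exp(tA) v‖² is convex on ℝ; in fact f''(t) ≥ 0 for all t, with f''(t) = 0 at some t only if exp(tA)v is an eigenvector of A. -/
/-! With `g t = exp (t • A) v` we have `g' = A g`, so symmetry of `A` gives
`(‖g‖²)' = 2 re ⟪A g, g⟫` and `(re ⟪A g, g⟫)' = 2 ‖A g‖²`. Hence
`(log ‖g‖²)'' = 4 (‖A g‖² ‖g‖² - (re ⟪A g, g⟫)²) / ‖g‖⁴`, which is nonnegative by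
Cauchy–Schwarz and vanishes only in its equality case, where `A g` is a multiple of `g`.
Invertibility of `exp (t • A)` keeps `g` away from `0`. -/

open scoped InnerProductSpace
open RCLike

section Exp

open NormedSpace

theorem exp_apply_ne_zero {𝕜 E : Type*} [RCLike 𝕜] [NormedAddCommGroup E] [NormedSpace 𝕜 E]
    [CompleteSpace E] (B : E →L[𝕜] E) {v : E} (hv : v ≠ 0) : exp B v ≠ 0 := by
  have hunit : IsUnit (exp B) := isUnit_exp_of_mem_ball (𝕂 := 𝕜) <|
    (expSeries_radius_eq_top 𝕜 (E →L[𝕜] E)).symm ▸ edist_lt_top _ _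
  have hinj := (ContinuousLinearMap.isUnit_iff_bijective.1 hunit).injective
  exact fun h => hv (hinj (h.trans (map_zero _).symm))

theorem hasDerivAt_exp_smul_apply {E : Type*} [NormedAddCommGroup E] [NormedSpace ℂ E]
    [CompleteSpace E] (A : E →L[ℂ] E) (v : E) (t : ℝ) :
    HasDerivAt (fun s : ℝ => exp (s • A) v) (A (exp (t • A) v)) t :=
  ((ContinuousLinearMap.apply ℂ E v).restrictScalars ℝ).hasFDerivAt.comp_hasDerivAt t
    (hasDerivAt_exp_smul_const' A t)

end Exp

section CauchySchwarz

variable {𝕜 E : Type*} [RCLike 𝕜] [NormedAddCommGroup E] [InnerProductSpace 𝕜 E]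

theorem re_inner_sq_le_norm_sq_mul_norm_sq (x y : E) :
    re ⟪x, y⟫_𝕜 ^ 2 ≤ ‖x‖ ^ 2 * ‖y‖ ^ 2 := by
  rw [← mul_pow, ← sq_abs]
  exact pow_le_pow_left₀ (abs_nonneg _) ((abs_re_le_norm _).trans (norm_inner_le_norm x y)) 2

theorem exists_smul_eq_of_re_inner_sq_eq {x y : E} (hx : x ≠ 0)
    (h : re ⟪x, y⟫_𝕜 ^ 2 = ‖x‖ ^ 2 * ‖y‖ ^ 2) : ∃ c : 𝕜, y = c • x := by
  have habs : |re ⟪x, y⟫_𝕜| = ‖x‖ * ‖y‖ := by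
    rw [← sq_eq_sq₀ (abs_nonneg _) (by positivity), sq_abs, h, mul_pow]
  have hnorm : ‖⟪x, y⟫_𝕜‖ = ‖x‖ * ‖y‖ :=
    le_antisymm (norm_inner_le_norm x y) (habs ▸ abs_re_le_norm _)
  exact Or.resolve_left (((norm_inner_eq_norm_tfae 𝕜 x y).out 0 2).1 hnorm) hx

end CauchySchwarz

section SymmetricFlow

variable {𝕜 V : Type*} [RCLike 𝕜] [NormedAddCommGroup V] [InnerProductSpace 𝕜 V]
  [NormedSpace ℝ V] {A : V →L[𝕜] V} {g : ℝ → V} {t : ℝ}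

theorem hasDerivAt_norm_sq_of_isSymmetric (hA : (A : V →ₗ[𝕜] V).IsSymmetric)
    (hg : HasDerivAt g (A (g t)) t) :
    HasDerivAt (fun s => ‖g s‖ ^ 2) (2 * re ⟪A (g t), g t⟫_𝕜) t := by
  have := reCLM.hasFDerivAt.comp_hasDerivAt t (hg.inner 𝕜 hg)
  simp only [Function.comp_def, reCLM_apply, inner_self_eq_norm_sq] at this
  refine this.congr_deriv ?_
  rw [← hA.apply_clm, map_add]; ring

theorem hasDerivAt_re_inner_apply_of_isSymmetric [IsScalarTower ℝ 𝕜 V]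
    (hA : (A : V →ₗ[𝕜] V).IsSymmetric) (hg : HasDerivAt g (A (g t)) t) :
    HasDerivAt (fun s => re ⟪A (g s), g s⟫_𝕜) (2 * ‖A (g t)‖ ^ 2) t := by
  have hAg : HasDerivAt (fun s => A (g s)) (A (A (g t))) t :=
    (A.restrictScalars ℝ).hasFDerivAt.comp_hasDerivAt t hg
  have := reCLM.hasFDerivAt.comp_hasDerivAt t (hAg.inner 𝕜 hg)
  simp only [Function.comp_def, reCLM_apply] at this
  refine this.congr_deriv ?_
  rw [hA.apply_clm (A (g t)), map_add, inner_self_eq_norm_sq]; ring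

theorem hasDerivAt_log_norm_sq_of_isSymmetric (hA : (A : V →ₗ[𝕜] V).IsSymmetric)
    (hg : HasDerivAt g (A (g t)) t) (hgt : g t ≠ 0) :
    HasDerivAt (fun s => Real.log (‖g s‖ ^ 2)) (2 * re ⟪A (g t), g t⟫_𝕜 / ‖g t‖ ^ 2) t :=
  (hasDerivAt_norm_sq_of_isSymmetric hA hg).log (by positivity)

theorem hasDerivAt_deriv_log_norm_sq_of_isSymmetric [IsScalarTower ℝ 𝕜 V]
    (hA : (A : V →ₗ[𝕜] V).IsSymmetric) (hg : ∀ s, HasDerivAt g (A (g s)) s) (hg0 : ∀ s, g s ≠ 0) :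
    HasDerivAt (deriv fun s => Real.log (‖g s‖ ^ 2))
      (4 * (‖A (g t)‖ ^ 2 * ‖g t‖ ^ 2 - re ⟪A (g t), g t⟫_𝕜 ^ 2) / ‖g t‖ ^ 4) t := by
  have hderiv : (deriv fun s => Real.log (‖g s‖ ^ 2)) =
      fun s => 2 * re ⟪A (g s), g s⟫_𝕜 / ‖g s‖ ^ 2 :=
    funext fun s => (hasDerivAt_log_norm_sq_of_isSymmetric hA (hg s) (hg0 s)).deriv
  have hgt : ‖g t‖ ≠ 0 := norm_ne_zero_iff.2 (hg0 t)
  rw [hderiv]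
  refine (((hasDerivAt_re_inner_apply_of_isSymmetric hA (hg t)).const_mul 2).div
    (hasDerivAt_norm_sq_of_isSymmetric hA (hg t)) (by positivity)).congr_deriv ?_
  field_simp
  ring

end SymmetricFlow

open scoped ComplexInnerProductSpace

/-- For a self-adjoint operator `A` on a finite-dimensional
complex inner product space and `v ≠ 0`, the function
`f(t) = log ‖exp(tA) v‖²` is convex on `ℝ`; in fact `f'' ≥ 0` everywhere, and
`f''(t) = 0` only if `exp(tA)v` is an eigenvector of `A`. -/
theorem stmt11 {V : Type*} [NormedAddCommGroup V] [InnerProductSpace ℂ V]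
    [FiniteDimensional ℂ V]
    (A : V →L[ℂ] V)
    (hA : ∀ x y : V, ⟪A x, y⟫ = ⟪x, A y⟫)   -- A self-adjoint
    (v : V) (hv : v ≠ 0)
    (f : ℝ → ℝ)
    (hf : ∀ t : ℝ, f t = Real.log (‖(NormedSpace.exp (t • A)) v‖ ^ 2)) :
    ConvexOn ℝ Set.univ f
    ∧ (∀ t : ℝ, 0 ≤ deriv (deriv f) t)
    ∧ (∀ t : ℝ, deriv (deriv f) t = 0 →
        ∃ c : ℂ, A ((NormedSpace.exp (t • A)) v)
          = c • ((NormedSpace.exp (t • A)) v)) := by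
  set g : ℝ → V := fun t => NormedSpace.exp (t • A) v
  have hAsymm : (A : V →ₗ[ℂ] V).IsSymmetric := hA
  have hg (t : ℝ) : HasDerivAt g (A (g t)) t := hasDerivAt_exp_smul_apply A v t
  have hg0 (t : ℝ) : g t ≠ 0 := exp_apply_ne_zero _ hv
  obtain rfl : f = fun t => Real.log (‖g t‖ ^ 2) := funext hf
  have hf' (t : ℝ) := hasDerivAt_log_norm_sq_of_isSymmetric hAsymm (hg t) (hg0 t)
  have hf'' (t : ℝ) := hasDerivAt_deriv_log_norm_sq_of_isSymmetric (t := t) hAsymm hg hg0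
  have hnonneg (t : ℝ) : 0 ≤ deriv (deriv fun t => Real.log (‖g t‖ ^ 2)) t := by
    rw [(hf'' t).deriv]
    have := re_inner_sq_le_norm_sq_mul_norm_sq (𝕜 := ℂ) (A (g t)) (g t)
    exact div_nonneg (by linarith) (by positivity)
  refine ⟨convexOn_univ_of_deriv2_nonneg (fun t => (hf' t).differentiableAt)
    (fun t => (hf'' t).differentiableAt) (by simpa using hnonneg), hnonneg, fun t ht => ?_⟩
  rw [(hf'' t).deriv, div_eq_zero_iff, or_iff_left (by simpa using hg0 t)] at ht
  refine exists_smul_eq_of_re_inner_sq_eq (hg0 t) ?_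
  rw [inner_re_symm (𝕜 := ℂ), mul_comm]
  linarith
end

section
/- Let A be a self-adjoint operator on a finite-dimensional complex inner product space V and v ≠ 0. Then the derivative of f(t) = ½ log ‖exp(tA)v‖² is f'(t) = ⟨A w(t), w(t)⟩ where w(t) = exp(tA)v / ‖exp(tA)v‖. In particular f'(0) = Re⟨Av, v⟩ / ‖v‖². -/
/-!
With `g t = exp (t • A) v`, we have `g' = A ∘ g`, and `g` never vanishes because `exp (t • A)` is
invertible. The chain rule for `½ log ‖g‖²` gives `f' = Re ⟪g', g⟫ / ‖g‖² = Re ⟪A g, g⟫ / ‖g‖²`,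
which is `Re ⟪A w, w⟫` for the normalised vector `w = g / ‖g‖`.
-/

open scoped ComplexInnerProductSpace

section
variable {V : Type*} [NormedAddCommGroup V] [NormedSpace ℂ V] [CompleteSpace V]

theorem exp_apply_ne_zero_s12 (T : V →L[ℂ] V) {v : V} (hv : v ≠ 0) :
    NormedSpace.exp T v ≠ 0 := by
  have hunit : IsUnit (NormedSpace.exp T) := NormedSpace.isUnit_exp_of_mem_ball (𝕂 := ℂ)
    ((NormedSpace.expSeries_radius_eq_top ℂ (V →L[ℂ] V)).symm ▸ edist_lt_top _ _)
  exact (ContinuousLinearMap.isUnit_iff_bijective.mp hunit).injective.ne_iff' (map_zero _) |>.mpr hv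

theorem hasDerivAt_exp_smul_apply_s12 (T : V →L[ℂ] V) (v : V) (t : ℝ) :
    HasDerivAt (fun s : ℝ => NormedSpace.exp (s • T) v) (T (NormedSpace.exp (t • T) v)) t := by
  simpa [Function.comp_def] using
    ((ContinuousLinearMap.apply ℂ V v).restrictScalars ℝ).hasFDerivAt.comp_hasDerivAt t
      (hasDerivAt_exp_smul_const' T t)

end

section
variable {V : Type*} [NormedAddCommGroup V] [InnerProductSpace ℂ V]

theorem HasDerivAt.half_log_norm_sq {g : ℝ → V} {g' : V} {t : ℝ} (hg : HasDerivAt g g' t)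
    (h0 : g t ≠ 0) :
    HasDerivAt (fun s => 1 / 2 * Real.log (‖g s‖ ^ 2)) ((⟪g', g t⟫).re / ‖g t‖ ^ 2) t := by
  -- `HasDerivAt.norm_sq` needs a real inner product space: use `Re ⟪·, ·⟫` on `V`.
  let := InnerProductSpace.complexToReal (G := V)
  refine ((hg.norm_sq.log (by positivity)).const_mul (1 / 2 : ℝ)).congr_deriv ?_
  rw [real_inner_comm, real_inner_eq_re_inner ℂ, RCLike.re_to_complex]
  ring

theorem re_inner_map_inv_norm_smul (T : V →L[ℂ] V) (x : V) :
    (⟪T (‖x‖⁻¹ • x), ‖x‖⁻¹ • x⟫).re = (⟪T x, x⟫).re / ‖x‖ ^ 2 := by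
  rw [← Complex.coe_smul, map_smul, inner_smul_left, inner_smul_right, Complex.conj_ofReal,
    ← mul_assoc, ← Complex.ofReal_mul, Complex.re_ofReal_mul]
  ring

end

theorem stmt12_general {V : Type*} [NormedAddCommGroup V] [InnerProductSpace ℂ V]
    [FiniteDimensional ℂ V]
    (A : V →L[ℂ] V)
    (v : V) (hv : v ≠ 0)
    (f : ℝ → ℝ)
    (hf : ∀ t : ℝ, f t = (1 / 2) * Real.log (‖(NormedSpace.exp (t • A)) v‖ ^ 2))
    (w : ℝ → V)
    (hw : ∀ t : ℝ, w t = (‖(NormedSpace.exp (t • A)) v‖)⁻¹ • (NormedSpace.exp (t • A)) v) :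
    (∀ t : ℝ, HasDerivAt f ((⟪A (w t), w t⟫).re) t)
    ∧ deriv f 0 = (⟪A v, v⟫).re / ‖v‖ ^ 2 := by
  have hderiv : ∀ t : ℝ, HasDerivAt f ((⟪A (w t), w t⟫).re) t := by
    intro t
    rw [funext hf, hw, re_inner_map_inv_norm_smul]
    exact (hasDerivAt_exp_smul_apply_s12 A v t).half_log_norm_sq (exp_apply_ne_zero_s12 _ hv)
  refine ⟨hderiv, ?_⟩
  rw [(hderiv 0).deriv, hw, zero_smul, NormedSpace.exp_zero, one_apply_eq_self,
    re_inner_map_inv_norm_smul]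

/-- For a self-adjoint operator `A` on a finite-dimensional
complex inner product space and `v ≠ 0`, the function
`f(t) = ½ log ‖exp(tA)v‖²` has derivative `f'(t) = ⟨A w(t), w(t)⟩` (a real
number, as `A` is self-adjoint), where `w(t) = exp(tA)v/‖exp(tA)v‖`.
In particular `f'(0) = Re⟨Av, v⟩/‖v‖²`. -/
theorem stmt12 {V : Type*} [NormedAddCommGroup V] [InnerProductSpace ℂ V]
    [FiniteDimensional ℂ V]
    (A : V →L[ℂ] V)
    (hA : ∀ x y : V, ⟪A x, y⟫ = ⟪x, A y⟫)   -- A self-adjoint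
    (v : V) (hv : v ≠ 0)
    (f : ℝ → ℝ)
    (hf : ∀ t : ℝ, f t = (1 / 2) * Real.log (‖(NormedSpace.exp (t • A)) v‖ ^ 2))
    (w : ℝ → V)
    (hw : ∀ t : ℝ, w t = (‖(NormedSpace.exp (t • A)) v‖)⁻¹ • (NormedSpace.exp (t • A)) v) :
    (∀ t : ℝ, HasDerivAt f ((⟪A (w t), w t⟫).re) t)
    ∧ deriv f 0 = (⟪A v, v⟫).re / ‖v‖ ^ 2 :=
  stmt12_general A v hv f hf w hw
end
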